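/- arXiv:2003.06548 — 5 statements merged into one kernel-verified Lean document; each statement's English description precedes it below -/
import Mathlib

section
/- Let n ≥ 1 and d = 2n. For every pair (I, J) of disjoint n-element subsets of {1, …, 2n+1}, the family G(I,J) = {x_i : i ∈ I} ∪ {y_j : j ∈ J} is a ℤ-basis of ℤ^{2n}; equivalently, the 2n × 2n integer matrix whose columns are these vectors has determinant ±1. (This is the smoothness of every maximal cone of the fan Σ of the pseudo-symmetric toric Fano manifold V^{2n}.) -/
/-- The primitive ray generators `x_1, …, x_{2n+1}` of the fan of `V^{2n}`
(0-indexed: for `i < 2n`, `genX n i = e_i`; `genX n (2n) = -(e_1 + ⋯ + e_{2n})`). -/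
def genX (n : ℕ) (i : Fin (2*n+1)) : Fin (2*n) → ℤ :=
  fun j => if (i : ℕ) = 2*n then -1 else if (j : ℕ) = (i : ℕ) then 1 else 0

/-- The generators `y_1, …, y_{2n+1}`, where `y_i = -x_i`. -/
def genY (n : ℕ) (i : Fin (2*n+1)) : Fin (2*n) → ℤ :=
  fun j => -(genX n i j)

lemma prod_pm {α : Type*} (s : Finset α) (v : α → ℤ) (hv : ∀ k, v k = 1 ∨ v k = -1) :
    s.prod v = 1 ∨ s.prod v = -1 := by
  refine Finset.prod_induction v (fun x => x = 1 ∨ x = -1) ?_ (Or.inl rfl) (fun k _ => hv k)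
  rintro a b (rfl | rfl) (rfl | rfl) <;> norm_num

lemma det_perm_mat {N : ℕ} (τ : Equiv.Perm (Fin N)) :
    (Matrix.det fun k j => if τ k = j then (1:ℤ) else 0) = 1 ∨
    (Matrix.det fun k j => if τ k = j then (1:ℤ) else 0) = -1 := by
  have h : (fun k j => if τ k = j then (1:ℤ) else 0) =
      (1 : Matrix (Fin N) (Fin N) ℤ).submatrix τ id := by
    funext k j
    simp [Matrix.one_apply]
  rw [h, Matrix.det_permute, Matrix.det_one, mul_one]
  rcases Int.units_eq_one_or (Equiv.Perm.sign τ) with h | h <;> simp [h]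

lemma det_gen (n : ℕ) (hn : 1 ≤ n) (f : Fin (2*n) → Fin (2*n+1))
    (hf : Function.Injective f) :
    (Matrix.of fun k j => genX n (f k) j).det = 1 ∨
      (Matrix.of fun k j => genX n (f k) j).det = -1 := by
  by_cases hex : ∃ k0, ((f k0 : ℕ) = 2*n)
  · obtain ⟨k0, hk0⟩ := hex
    have hlt : ∀ k, k ≠ k0 → (f k : ℕ) < 2*n := by
      intro k hk
      have h1 := (f k).isLt
      have hne : (f k : ℕ) ≠ 2*n := fun h => hk (hf (Fin.ext (h.trans hk0.symm)))
      omega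
    have hpos : 0 < 2*n := by omega
    set σ0 : Fin (2*n) → Fin (2*n) := fun k => ⟨(f k : ℕ) % (2*n), Nat.mod_lt _ hpos⟩ with hσ0def
    have hσ0 : ∀ k, k ≠ k0 → (σ0 k : ℕ) = (f k : ℕ) :=
      fun k hk => Nat.mod_eq_of_lt (hlt k hk)
    set T : Finset (Fin (2*n)) := (Finset.univ.erase k0).image σ0 with hTdef
    obtain ⟨m, hm⟩ : ∃ m, m ∉ T := by
      by_contra h
      push_neg at h
      have hU : T = Finset.univ := Finset.eq_univ_iff_forall.mpr h
      have h1 : T.card ≤ (Finset.univ.erase k0).card := Finset.card_image_le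
      rw [hU] at h1
      simp [Finset.card_erase_of_mem] at h1
      omega
    -- the permutation τ
    have hτinj : Function.Injective (fun k => if k = k0 then m else σ0 k) := by
      intro a b hab
      simp only at hab
      by_cases ha : a = k0 <;> by_cases hb : b = k0
      · rw [ha, hb]
      · exfalso; rw [if_pos ha, if_neg hb] at hab
        exact hm (hab ▸ Finset.mem_image.mpr ⟨b, by simp [hb], rfl⟩)
      · exfalso; rw [if_neg ha, if_pos hb] at hab
        exact hm (hab ▸ Finset.mem_image.mpr ⟨a, by simp [ha], rfl⟩)
      · rw [if_neg ha, if_neg hb] at hab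
        have : (f a : ℕ) = (f b : ℕ) := by
          rw [← hσ0 a ha, ← hσ0 b hb, hab]
        exact hf (Fin.ext this)
    set τ : Equiv.Perm (Fin (2*n)) :=
      Equiv.ofBijective _ (Finite.injective_iff_bijective.mp hτinj) with hτdef
    have hτ : ∀ k, τ k = if k = k0 then m else σ0 k := fun k => rfl
    set B : Matrix (Fin (2*n)) (Fin (2*n)) ℤ :=
      Matrix.of fun k j => (if k = k0 then (-1:ℤ) else 1) * (if τ k = j then 1 else 0) with hBdef
    have hdetB : B.det = 1 ∨ B.det = -1 := by
      rw [hBdef, Matrix.det_mul_column (fun k => if k = k0 then (-1:ℤ) else 1)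
        (fun k j => if τ k = j then (1:ℤ) else 0)]
      have hprod : (∏ k : Fin (2*n), (if k = k0 then (-1:ℤ) else 1)) = -1 := by
        rw [Finset.prod_ite_eq' Finset.univ k0 (fun _ => (-1:ℤ))]
        simp
      rw [hprod]
      rcases det_perm_mat τ with h | h <;> rw [h] <;> norm_num
    -- A in terms of B
    have key : (Matrix.of fun k j => genX n (f k) j) =
        B.updateRow k0 (∑ k, (if k = k0 then (1:ℤ) else -1) • B k) := by
      ext k j
      by_cases hk : k = k0
      · rw [hk, Matrix.updateRow_self]
        have hsum : (∑ k, (if k = k0 then (1:ℤ) else -1) • B k) j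
            = ∑ k, -(if τ k = j then (1:ℤ) else 0) := by
          rw [Finset.sum_apply]
          congr 1; ext k
          by_cases hk' : k = k0
          · rw [hk']
            simp only [hBdef, Matrix.of_apply, if_pos rfl, smul_eq_mul]
            by_cases hj : τ k0 = j <;> simp [hj]
          · simp only [hBdef, Matrix.of_apply, if_neg hk', smul_eq_mul, one_mul]
            by_cases hj : τ k = j <;> simp [hj, hk']
        rw [hsum]
        have : (∑ k, -(if τ k = j then (1:ℤ) else 0)) = -1 := by
          rw [Finset.sum_neg_distrib]
          congr 1
          rw [Fintype.sum_bijective τ τ.bijective _ (fun t => if t = j then (1:ℤ) else 0)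
            (fun k => rfl)]
          simp
        rw [this]
        simp [genX, hk0]
      · rw [Matrix.updateRow_ne hk]
        have h1 : (f k : ℕ) ≠ 2*n := by
          intro h; exact hk (hf (Fin.ext (h.trans hk0.symm)))
        simp only [hBdef, Matrix.of_apply, if_neg hk, one_mul, genX, if_neg h1, hτ k]
        have hiff : ((j:ℕ) = (f k:ℕ)) ↔ ((if k = k0 then m else σ0 k) = j) := by
          rw [if_neg hk, Fin.ext_iff, hσ0 k hk]
          omega
        simp only [hiff]
        rw [if_neg hk]
    rw [key, Matrix.det_updateRow_sum B k0 (fun k => if k = k0 then (1:ℤ) else -1)]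
    simpa using hdetB
  · push_neg at hex
    have hlt : ∀ k, (f k : ℕ) < 2*n := by
      intro k
      have := (f k).isLt
      have := hex k
      omega
    have hinj : Function.Injective (fun k => (⟨(f k : ℕ), hlt k⟩ : Fin (2*n))) := by
      intro a b hab
      have h2 := congrArg Fin.val hab
      exact hf (Fin.ext h2)
    set τ : Equiv.Perm (Fin (2*n)) :=
      Equiv.ofBijective _ (Finite.injective_iff_bijective.mp hinj) with hτdef
    have h : (Matrix.of fun k j => genX n (f k) j)
        = Matrix.of fun k j => if τ k = j then (1:ℤ) else 0 := by
      ext k j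
      have hτ : τ k = (⟨(f k : ℕ), hlt k⟩ : Fin (2*n)) := rfl
      simp only [Matrix.of_apply, genX, if_neg (hex k), hτ]
      congr 1
      simp only [eq_iff_iff, Fin.ext_iff]
      omega
    rw [h]
    exact det_perm_mat τ

/-- For every pair `(I, J)` of disjoint `n`-element subsets of `{1, …, 2n+1}`,
the family `G(I,J) = {x_i : i ∈ I} ∪ {y_j : j ∈ J}` is a ℤ-basis of `ℤ^{2n}`;
equivalently, the matrix whose columns are these vectors has determinant `±1`. -/
theorem smoothness_of_maximal_cones_of_V (n : ℕ) (hn : 1 ≤ n)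
    (I J : Finset (Fin (2*n+1))) (hIJ : Disjoint I J)
    (hI : I.card = n) (hJ : J.card = n) :
    let e : Fin (2*n) ≃o ((I ∪ J : Finset (Fin (2*n+1))) : Finset (Fin (2*n+1))) :=
      (I ∪ J).orderIsoOfFin
        (by rw [Finset.card_union_of_disjoint hIJ, hI, hJ, two_mul])
    let g : Fin (2*n) → (Fin (2*n) → ℤ) :=
      fun k => if ((e k : Fin (2*n+1)) ∈ I) then genX n (e k) else genY n (e k)
    (∃ b : Module.Basis (Fin (2*n)) ℤ (Fin (2*n) → ℤ), ∀ k, b k = g k) ∧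
      ((Matrix.of fun (j k : Fin (2*n)) => g k j).det = 1 ∨
        (Matrix.of fun (j k : Fin (2*n)) => g k j).det = -1) := by
  intro e g
  have hg : ∀ k, g k = if ((e k : Fin (2*n+1)) ∈ I) then genX n (e k) else genY n (e k) :=
    fun k => rfl
  have hf : Function.Injective (fun k : Fin (2*n) => ((e k : Fin (2*n+1)))) := by
    intro a b hab
    exact e.injective (Subtype.ext hab)
  set M := (Matrix.of fun j k => g k j : Matrix (Fin (2*n)) (Fin (2*n)) ℤ) with hM
  have hMT : M.transpose = Matrix.of fun k j =>
      (if ((e k : Fin (2*n+1)) ∈ I) then (1:ℤ) else -1) * genX n (e k) j := by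
    ext k j
    show g k j = _
    rw [hg k]
    by_cases h : ((e k : Fin (2*n+1)) ∈ I) <;> simp [h, genY]
  have h1 : M.det = M.transpose.det := (Matrix.det_transpose M).symm
  rw [hMT, Matrix.det_mul_column (fun k => if ((e k : Fin (2*n+1)) ∈ I) then (1:ℤ) else -1)
    (fun k j => genX n (e k) j)] at h1
  have h2 : (Matrix.det fun k j => genX n ((e k : Fin (2*n+1))) j) = 1 ∨
      (Matrix.det fun k j => genX n ((e k : Fin (2*n+1))) j) = -1 :=
    det_gen n hn _ hf
  have h3 := prod_pm Finset.univ
    (fun k : Fin (2*n) => if ((e k : Fin (2*n+1)) ∈ I) then (1:ℤ) else -1)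
    (fun k => by by_cases h : ((e k : Fin (2*n+1)) ∈ I) <;> simp [h])
  have hdet : M.det = 1 ∨ M.det = -1 := by
    rcases h2 with h2 | h2 <;> rcases h3 with h3 | h3 <;>
      rw [h1, h2, h3] <;> norm_num
  refine ⟨?_, hdet⟩
  have hunit : IsUnit M.det := by rcases hdet with h | h <;> simp [h]
  refine ⟨(Pi.basisFun ℤ (Fin (2*n))).map
    (M.toLinearEquiv' (M.invertibleOfIsUnitDet hunit)), fun k => ?_⟩
  rw [Module.Basis.map_apply, Pi.basisFun_apply]
  show Matrix.toLin' M (Pi.single k 1) = g k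
  rw [Matrix.toLin'_apply, Matrix.mulVec_single_one]
  rfl
end

section
/- Let n ≥ 1 and d = 2n. Every vector v ∈ ℝ^{2n} can be written as a nonnegative real linear combination of the elements of G(I,J) for some pair (I, J) of disjoint n-element subsets of {1, …, 2n+1}; in other words, the cones cone(G(I,J)) (nonnegative spans of G(I,J)) cover all of ℝ^{2n}. (This is the completeness of the fan Σ of V^{2n}.) -/
/-- The primitive ray generators `x_1, …, x_{2n+1}` of the fan of `V^{2n}`, as real vectors
(0-indexed: for `i < 2n`, `genXR n i = e_i`; `genXR n (2n) = -(e_1 + ⋯ + e_{2n})`). -/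
def genXR (n : ℕ) (i : Fin (2*n+1)) : Fin (2*n) → ℝ :=
  fun j => if (i : ℕ) = 2*n then -1 else if (j : ℕ) = (i : ℕ) then 1 else 0

/-- The generators `y_1, …, y_{2n+1}`, where `y_i = -x_i`. -/
def genYR (n : ℕ) (i : Fin (2*n+1)) : Fin (2*n) → ℝ :=
  fun j => -(genXR n i j)

/-- The generating set `G(I,J) = {x_i : i ∈ I} ∪ {y_j : j ∈ J} ⊆ ℝ^{2n}`. -/
def Gset (n : ℕ) (I J : Finset (Fin (2*n+1))) : Set (Fin (2*n) → ℝ) :=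
  {v | (∃ i ∈ I, v = genXR n i) ∨ (∃ j ∈ J, v = genYR n j)}

/-- `cone S`: the set of all nonnegative real linear combinations of elements of `S`. -/
def cone {m : ℕ} (S : Set (Fin m → ℝ)) : Set (Fin m → ℝ) :=
  {v | ∃ (t : Finset (Fin m → ℝ)) (c : (Fin m → ℝ) → ℝ),
    ↑t ⊆ S ∧ (∀ w ∈ t, 0 ≤ c w) ∧ v = ∑ w ∈ t, c w • w}

open Finset

/-- A "median" value exists: a real `μ` such that at most `n` of the `2n+1` values are
below `μ` and at most `n` are above `μ`. -/
lemma median_exists {N n : ℕ} (hN : N = 2*n+1) (w : Fin N → ℝ) :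
    ∃ μ : ℝ, #{i : Fin N | w i < μ} ≤ n ∧ #{i : Fin N | μ < w i} ≤ n := by
  have hn : n < N := by omega
  set σ := Tuple.sort w with hσ
  have hmono : Monotone (w ∘ σ) := Tuple.monotone_sort w
  refine ⟨w (σ ⟨n, hn⟩), ?_, ?_⟩
  · calc #{i : Fin N | w i < w (σ ⟨n, hn⟩)}
        ≤ #(Finset.range n) := by
          apply Finset.card_le_card_of_injOn (fun i => ((σ.symm i : Fin N) : ℕ))
          · intro i hi
            simp only [Finset.mem_coe, Finset.mem_filter, Finset.mem_univ, true_and] at hi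
            simp only [Finset.mem_coe, Finset.mem_range]
            by_contra h
            push_neg at h
            have := hmono (show (⟨n, hn⟩ : Fin N) ≤ σ.symm i from h)
            simp only [Function.comp_apply, Equiv.apply_symm_apply] at this
            exact absurd hi (not_lt.mpr this)
          · intro a _ b _ hab
            exact σ.symm.injective (Fin.val_injective hab)
        _ = n := Finset.card_range n
  · calc #{i : Fin N | w (σ ⟨n, hn⟩) < w i}
        ≤ #(Finset.Ico (n+1) N) := by
          apply Finset.card_le_card_of_injOn (fun i => ((σ.symm i : Fin N) : ℕ))
          · intro i hi
            simp only [Finset.mem_coe, Finset.mem_filter, Finset.mem_univ, true_and] at hi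
            simp only [Finset.mem_coe, Finset.mem_Ico]
            constructor
            · by_contra h
              push_neg at h
              have hle : σ.symm i ≤ (⟨n, hn⟩ : Fin N) := by
                rw [Fin.le_def]; simp only []; omega
              have := hmono hle
              simp only [Function.comp_apply, Equiv.apply_symm_apply] at this
              exact absurd hi (not_lt.mpr this)
            · exact (σ.symm i).isLt
          · intro a _ b _ hab
            exact σ.symm.injective (Fin.val_injective hab)
        _ ≤ n := by rw [Nat.card_Ico]; omega

lemma genXR_inj (n : ℕ) : Function.Injective (genXR n) := by
  intro i i' h
  by_cases hi : (i : ℕ) = 2*n <;> by_cases hi' : (i' : ℕ) = 2*n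
  · exact Fin.ext (hi.trans hi'.symm)
  · have hlt : (i' : ℕ) < 2*n := by have := i'.isLt; omega
    have := congrFun h ⟨i', hlt⟩
    simp [genXR, hi, hi'] at this
    norm_num at this
  · have hlt : (i : ℕ) < 2*n := by have := i.isLt; omega
    have := congrFun h ⟨i, hlt⟩
    simp [genXR, hi, hi'] at this
    norm_num at this
  · have hlt : (i : ℕ) < 2*n := by have := i.isLt; omega
    by_cases he : (i : ℕ) = (i' : ℕ)
    · exact Fin.ext he
    · have := congrFun h ⟨i, hlt⟩
      simp [genXR, hi, hi', he] at this

lemma genYR_inj (n : ℕ) : Function.Injective (genYR n) := by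
  intro i i' h
  apply genXR_inj n
  funext k
  have := congrFun h k
  simp only [genYR, neg_inj] at this
  exact this

lemma genXR_ne_genYR (n : ℕ) (hn : 1 ≤ n) (i i' : Fin (2*n+1)) :
    genXR n i ≠ genYR n i' := by
  intro h
  by_cases hi : (i : ℕ) = 2*n <;> by_cases hi' : (i' : ℕ) = 2*n
  · have := congrFun h ⟨0, by omega⟩
    simp [genXR, genYR, hi, hi'] at this
    norm_num at this
  · have hlt : (i' : ℕ) < 2*n := by have := i'.isLt; omega
    have hj : ∃ j : Fin (2*n), (j : ℕ) ≠ (i' : ℕ) := by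
      by_cases h0 : (i' : ℕ) = 0
      · exact ⟨⟨1, by omega⟩, by simp [h0]⟩
      · exact ⟨⟨0, by omega⟩, by simpa using fun hh => h0 hh.symm⟩
    obtain ⟨j, hjne⟩ := hj
    have := congrFun h j
    simp [genXR, genYR, hi, hi', hjne] at this
  · have hlt : (i : ℕ) < 2*n := by have := i.isLt; omega
    have hj : ∃ j : Fin (2*n), (j : ℕ) ≠ (i : ℕ) := by
      by_cases h0 : (i : ℕ) = 0
      · exact ⟨⟨1, by omega⟩, by simp [h0]⟩
      · exact ⟨⟨0, by omega⟩, by simpa using fun hh => h0 hh.symm⟩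
    obtain ⟨j, hjne⟩ := hj
    have := congrFun h j
    simp [genXR, genYR, hi, hi', hjne] at this
  · have hlt : (i : ℕ) < 2*n := by have := i.isLt; omega
    have := congrFun h ⟨i, hlt⟩
    by_cases he : (i : ℕ) = (i' : ℕ) <;>
      simp [genXR, genYR, hi, hi', he] at this <;> norm_num at this

/-- auxiliary: extend `v` by a zero in the last coordinate -/
noncomputable def wvec (n : ℕ) (v : Fin (2*n) → ℝ) (i : Fin (2*n+1)) : ℝ :=
  if h : (i : ℕ) < 2*n then v ⟨i, h⟩ else 0

lemma key_sum (n : ℕ) (v : Fin (2*n) → ℝ) (μ : ℝ) :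
    ∑ i : Fin (2*n+1), (wvec n v i - μ) • genXR n i = v := by
  funext j
  have : (∑ i : Fin (2*n+1), (wvec n v i - μ) • genXR n i) j
      = ∑ i : Fin (2*n+1), (wvec n v i - μ) * genXR n i j := by
    rw [Finset.sum_apply]; rfl
  rw [this, Fin.sum_univ_castSucc]
  have hlast : (wvec n v (Fin.last (2*n)) - μ) * genXR n (Fin.last (2*n)) j = μ := by
    simp [wvec, genXR, Fin.last]
  rw [hlast]
  have hterm : ∀ i : Fin (2*n), (wvec n v i.castSucc - μ) * genXR n i.castSucc j
      = if (j : ℕ) = (i : ℕ) then v i - μ else 0 := by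
    intro i
    have hi : ((i.castSucc : Fin (2*n+1)) : ℕ) = (i : ℕ) := rfl
    have hlt : ((i.castSucc : Fin (2*n+1)) : ℕ) < 2*n := by rw [hi]; exact i.isLt
    have hne : ¬ ((i.castSucc : Fin (2*n+1)) : ℕ) = 2*n := by omega
    have hne' : ¬ (i : ℕ) = 2*n := by have := i.isLt; omega
    simp only [wvec, genXR, hne, if_false, dif_pos hlt, hi]
    by_cases he : (j : ℕ) = (i : ℕ)
    · simp [he, hne']
    · simp [he, hne']
  simp_rw [hterm, Fin.val_eq_val]
  rw [Finset.sum_ite_eq Finset.univ j (fun i => v i - μ)]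
  simp

/-- Every `v ∈ ℝ^{2n}` is a nonnegative linear combination of the elements of `G(I,J)`
for some pair `(I,J)` of disjoint `n`-element subsets of `{1, …, 2n+1}`:
the cones `cone(G(I,J))` cover `ℝ^{2n}` (completeness of the fan of `V^{2n}`). -/
theorem fan_of_V_is_complete (n : ℕ) (hn : 1 ≤ n) (v : Fin (2*n) → ℝ) :
    ∃ I J : Finset (Fin (2*n+1)), Disjoint I J ∧ I.card = n ∧ J.card = n ∧
      v ∈ cone (Gset n I J) := by
  classical
  set w := wvec n v with hw
  obtain ⟨μ, hB, hA⟩ := median_exists (rfl : 2*n+1 = 2*n+1) w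
  set B : Finset (Fin (2*n+1)) := {i : Fin (2*n+1) | w i < μ} with hBdef
  set A : Finset (Fin (2*n+1)) := {i : Fin (2*n+1) | μ < w i} with hAdef
  have hcardU : Fintype.card (Fin (2*n+1)) = 2*n+1 := Fintype.card_fin _
  -- build I
  have hABc : A ⊆ Bᶜ := by
    intro i hi
    rw [Finset.mem_compl]
    simp only [hAdef, hBdef, Finset.mem_filter, Finset.mem_univ, true_and] at hi ⊢
    exact not_lt.mpr (le_of_lt hi)
  have hBc : #(Bᶜ) = 2*n+1 - #B := by rw [Finset.card_compl, hcardU]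
  obtain ⟨I, hAI, hIBc, hIcard⟩ :=
    Finset.exists_subsuperset_card_eq (n := n) hABc (by omega) (by omega)
  have hIn : #I = n := by omega
  -- build J
  have hBIc : B ⊆ Iᶜ := by
    intro i hi
    rw [Finset.mem_compl]
    intro hiI
    exact (Finset.mem_compl.mp (hIBc hiI)) hi
  have hIc : #(Iᶜ) = 2*n+1 - #I := by rw [Finset.card_compl, hcardU]
  obtain ⟨J, hBJ, hJIc, hJcard⟩ :=
    Finset.exists_subsuperset_card_eq (n := n) hBIc (by omega) (by omega)
  have hJn : #J = n := by omega
  have hdisjIJ : Disjoint I J := by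
    rw [Finset.disjoint_left]
    intro a haI haJ
    exact (Finset.mem_compl.mp (hJIc haJ)) haI
  -- basic sign facts
  have hInotB : ∀ i ∈ I, μ ≤ w i := by
    intro i hi
    have := Finset.mem_compl.mp (hIBc hi)
    simp only [hBdef, Finset.mem_filter, Finset.mem_univ, true_and] at this
    exact not_lt.mp this
  have hJnotA : ∀ j ∈ J, w j ≤ μ := by
    intro j hj
    have hjI : j ∉ I := Finset.mem_compl.mp (hJIc hj)
    have : j ∉ A := fun hjA => hjI (hAI hjA)
    simp only [hAdef, Finset.mem_filter, Finset.mem_univ, true_and] at this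
    exact not_lt.mp this
  have hrest : ∀ k : Fin (2*n+1), k ∉ I ∪ J → w k = μ := by
    intro k hk
    rw [Finset.mem_union] at hk
    push_neg at hk
    have hkA : k ∉ A := fun h => hk.1 (hAI h)
    have hkB : k ∉ B := fun h => hk.2 (hBJ h)
    simp only [hAdef, hBdef, Finset.mem_filter, Finset.mem_univ, true_and] at hkA hkB
    exact le_antisymm (not_lt.mp hkA) (not_lt.mp hkB)
  refine ⟨I, J, hdisjIJ, hIn, hJn, ?_⟩
  -- the coefficient function
  set g : (Fin (2*n) → ℝ) → ℝ := fun u =>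
    if h : ∃ i, i ∈ I ∧ u = genXR n i then w h.choose - μ
    else if h' : ∃ j, j ∈ J ∧ u = genYR n j then μ - w h'.choose
    else 0 with hg
  have hgX : ∀ i ∈ I, g (genXR n i) = w i - μ := by
    intro i hi
    have hex : ∃ i', i' ∈ I ∧ genXR n i = genXR n i' := ⟨i, hi, rfl⟩
    rw [hg]
    simp only [dif_pos hex]
    rw [← genXR_inj n hex.choose_spec.2]
  have hgY : ∀ j ∈ J, g (genYR n j) = μ - w j := by
    intro j hj
    have hnex : ¬ ∃ i', i' ∈ I ∧ genYR n j = genXR n i' := by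
      rintro ⟨i', _, hh⟩
      exact genXR_ne_genYR n hn i' j hh.symm
    have hex : ∃ j', j' ∈ J ∧ genYR n j = genYR n j' := ⟨j, hj, rfl⟩
    rw [hg]
    simp only [dif_neg hnex, dif_pos hex]
    rw [← genYR_inj n hex.choose_spec.2]
  have hdisjim : Disjoint (I.image (genXR n)) (J.image (genYR n)) := by
    rw [Finset.disjoint_left]
    rintro u hu hu'
    obtain ⟨i, _, rfl⟩ := Finset.mem_image.mp hu
    obtain ⟨j, _, hh⟩ := Finset.mem_image.mp hu'
    exact genXR_ne_genYR n hn i j hh.symm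
  refine ⟨I.image (genXR n) ∪ J.image (genYR n), g, ?_, ?_, ?_⟩
  · intro u hu
    rw [Finset.coe_union, Set.mem_union] at hu
    rcases hu with hu | hu
    · obtain ⟨i, hi, rfl⟩ := Finset.mem_image.mp (by exact_mod_cast hu)
      exact Or.inl ⟨i, hi, rfl⟩
    · obtain ⟨j, hj, rfl⟩ := Finset.mem_image.mp (by exact_mod_cast hu)
      exact Or.inr ⟨j, hj, rfl⟩
  · intro u hu
    rw [Finset.mem_union] at hu
    rcases hu with hu | hu
    · obtain ⟨i, hi, rfl⟩ := Finset.mem_image.mp hu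
      rw [hgX i hi]
      have := hInotB i hi
      linarith
    · obtain ⟨j, hj, rfl⟩ := Finset.mem_image.mp hu
      rw [hgY j hj]
      have := hJnotA j hj
      linarith
  · rw [Finset.sum_union hdisjim,
      Finset.sum_image (fun a _ b _ h => genXR_inj n h),
      Finset.sum_image (fun a _ b _ h => genYR_inj n h)]
    have h1 : ∑ i ∈ I, g (genXR n i) • genXR n i = ∑ i ∈ I, (w i - μ) • genXR n i :=
      Finset.sum_congr rfl (fun i hi => by rw [hgX i hi])
    have h2 : ∑ j ∈ J, g (genYR n j) • genYR n j = ∑ j ∈ J, (w j - μ) • genXR n j := by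
      refine Finset.sum_congr rfl (fun j hj => ?_)
      rw [hgY j hj]
      have hyx : genYR n j = -genXR n j := by funext k; rfl
      rw [hyx, smul_neg, ← neg_smul, neg_sub]
    rw [h1, h2, ← Finset.sum_union hdisjIJ]
    have h3 : ∑ i ∈ I ∪ J, (w i - μ) • genXR n i
        = ∑ i : Fin (2*n+1), (w i - μ) • genXR n i := by
      apply Finset.sum_subset (Finset.subset_univ _)
      intro k _ hk
      rw [hrest k hk]
      simp
    rw [h3, hw, key_sum]
end

section
/- Let n ≥ 2, and let A, B ⊆ {1, …, 2n+1} be disjoint subsets with |A| ≤ n, |B| ≤ n and |A| + |B| = 2n − 2. Then the number of pairs (I, J) of disjoint n-element subsets of {1, …, 2n+1} with A ⊆ I and B ⊆ J equals 6 if |A| = |B| = n − 1, and equals 3 otherwise (i.e., if |A| = n or |B| = n); in particular this number is never equal to 4. (This is the combinatorial content of the statement that V^{2n} contains no torus-invariant subsurface of Picard number two: a torus-invariant subsurface corresponding to a (2n−2)-dimensional cone has Picard number two exactly when that cone is contained in exactly four maximal cones.) -/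
/-- Let `n ≥ 2` and let `A, B ⊆ {1, …, 2n+1}` be disjoint with `|A| ≤ n`, `|B| ≤ n` and
`|A| + |B| = 2n − 2`. Then the number of pairs `(I,J)` of disjoint `n`-element subsets of
`{1, …, 2n+1}` with `A ⊆ I` and `B ⊆ J` is `6` if `|A| = |B| = n − 1`, is `3` if `|A| = n`
or `|B| = n`, and in particular is never equal to `4`. -/
theorem no_invariant_surface_of_picard_number_two_in_V (n : ℕ) (hn : 2 ≤ n)
    (A B : Finset (Fin (2*n+1))) (hAB : Disjoint A B)
    (hA : A.card ≤ n) (hB : B.card ≤ n) (hsum : A.card + B.card = 2*n - 2) :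
    (A.card = n - 1 ∧ B.card = n - 1 →
        (Finset.univ.filter
            (fun IJ : Finset (Fin (2*n+1)) × Finset (Fin (2*n+1)) =>
              Disjoint IJ.1 IJ.2 ∧ IJ.1.card = n ∧ IJ.2.card = n ∧
                A ⊆ IJ.1 ∧ B ⊆ IJ.2)).card = 6) ∧
      (A.card = n ∨ B.card = n →
        (Finset.univ.filter
            (fun IJ : Finset (Fin (2*n+1)) × Finset (Fin (2*n+1)) =>
              Disjoint IJ.1 IJ.2 ∧ IJ.1.card = n ∧ IJ.2.card = n ∧
                A ⊆ IJ.1 ∧ B ⊆ IJ.2)).card = 3) ∧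
      (Finset.univ.filter
          (fun IJ : Finset (Fin (2*n+1)) × Finset (Fin (2*n+1)) =>
            Disjoint IJ.1 IJ.2 ∧ IJ.1.card = n ∧ IJ.2.card = n ∧
              A ⊆ IJ.1 ∧ B ⊆ IJ.2)).card ≠ 4 := by
  classical
  set S := Finset.univ.filter
      (fun IJ : Finset (Fin (2*n+1)) × Finset (Fin (2*n+1)) =>
        Disjoint IJ.1 IJ.2 ∧ IJ.1.card = n ∧ IJ.2.card = n ∧
          A ⊆ IJ.1 ∧ B ⊆ IJ.2) with hS
  have hmemS : ∀ IJ : Finset (Fin (2*n+1)) × Finset (Fin (2*n+1)),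
      IJ ∈ S ↔ Disjoint IJ.1 IJ.2 ∧ IJ.1.card = n ∧ IJ.2.card = n ∧
        A ⊆ IJ.1 ∧ B ⊆ IJ.2 := by
    intro IJ; simp [hS]
  set C := (A ∪ B)ᶜ with hCdef
  have hCmem : ∀ x, x ∈ C ↔ x ∉ A ∧ x ∉ B := by
    intro x; simp [hCdef]
  have hCcard : C.card = 3 := by
    have hu : (A ∪ B).card = 2*n - 2 := by
      rw [Finset.card_union_of_disjoint hAB, hsum]
    rw [hCdef, Finset.card_compl, hu, Fintype.card_fin]
    omega
  -- Case 1
  have case1 : A.card = n - 1 → B.card = n - 1 → S.card = 6 := by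
    intro ha hb
    have h6 : C.offDiag.card = 6 := by
      rw [Finset.offDiag_card, hCcard]
    rw [← h6]
    refine (Finset.card_bij (fun p _ => (insert p.1 A, insert p.2 B)) ?_ ?_ ?_).symm
    · rintro ⟨a, b⟩ hp
      rw [Finset.mem_offDiag] at hp
      obtain ⟨haC, hbC, hab⟩ := hp
      rw [hCmem] at haC hbC
      rw [hmemS]
      refine ⟨?_, ?_, ?_, Finset.subset_insert _ _, Finset.subset_insert _ _⟩
      · rw [Finset.disjoint_left]
        intro x hx hx'
        rw [Finset.mem_insert] at hx hx'
        rcases hx with rfl | hx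
        · rcases hx' with h | h
          · exact hab h
          · exact haC.2 h
        · rcases hx' with rfl | h
          · exact hbC.1 hx
          · exact Finset.disjoint_left.mp hAB hx h
      · rw [Finset.card_insert_of_notMem haC.1, ha]; omega
      · rw [Finset.card_insert_of_notMem hbC.2, hb]; omega
    · rintro ⟨a, b⟩ hp ⟨a', b'⟩ hp' h
      rw [Finset.mem_offDiag] at hp hp'
      rw [Prod.mk.injEq] at h
      obtain ⟨h1, h2⟩ := h
      have ha1 : a ∈ insert a' A := h1 ▸ Finset.mem_insert_self a A
      have hb1 : b ∈ insert b' B := h2 ▸ Finset.mem_insert_self b B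
      have hanA := ((hCmem a).mp hp.1).1
      have hbnB := ((hCmem b).mp hp.2.1).2
      rw [Finset.mem_insert] at ha1 hb1
      have : a = a' := ha1.resolve_right (fun h => hanA h)
      have : b = b' := hb1.resolve_right (fun h => hbnB h)
      simp_all
    · rintro ⟨I, J⟩ hIJ
      rw [hmemS] at hIJ
      obtain ⟨hd, hI, hJ, hAI, hBJ⟩ := hIJ
      have hIA : (I \ A).card = 1 := by
        rw [Finset.card_sdiff_of_subset hAI, hI, ha]; omega
      have hJB : (J \ B).card = 1 := by
        rw [Finset.card_sdiff_of_subset hBJ, hJ, hb]; omega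
      obtain ⟨a, hA1⟩ := Finset.card_eq_one.mp hIA
      obtain ⟨b, hB1⟩ := Finset.card_eq_one.mp hJB
      have haI : a ∈ I \ A := hA1 ▸ Finset.mem_singleton_self a
      have hbJ : b ∈ J \ B := hB1 ▸ Finset.mem_singleton_self b
      rw [Finset.mem_sdiff] at haI hbJ
      have haJ : a ∉ J := Finset.disjoint_left.mp hd haI.1
      have hbI : b ∉ I := Finset.disjoint_right.mp hd hbJ.1
      refine ⟨(a, b), ?_, ?_⟩
      · rw [Finset.mem_offDiag, hCmem, hCmem]
        exact ⟨⟨haI.2, fun h => haJ (hBJ h)⟩, ⟨fun h => hbI (hAI h), hbJ.2⟩,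
          fun h => haJ (by rw [show a = b from h]; exact hbJ.1)⟩
      · have e1 : insert a A = I := by
          rw [Finset.insert_eq, ← hA1, Finset.sdiff_union_of_subset hAI]
        have e2 : insert b B = J := by
          rw [Finset.insert_eq, ← hB1, Finset.sdiff_union_of_subset hBJ]
        simp [e1, e2]
  -- Case 2a: A.card = n
  have case2a : A.card = n → S.card = 3 := by
    intro ha
    have hb : B.card = n - 2 := by omega
    have h3 : (C.powersetCard 2).card = 3 := by
      rw [Finset.card_powersetCard, hCcard]; decide
    rw [← h3]
    refine (Finset.card_bij (fun s _ => (A, B ∪ s)) ?_ ?_ ?_).symm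
    · intro s hs
      rw [Finset.mem_powersetCard] at hs
      obtain ⟨hsC, hs2⟩ := hs
      have hsA : Disjoint A s := Finset.disjoint_left.mpr
        fun x hx hxs => ((hCmem x).mp (hsC hxs)).1 hx
      have hsB : Disjoint B s := Finset.disjoint_left.mpr
        fun x hx hxs => ((hCmem x).mp (hsC hxs)).2 hx
      rw [hmemS]
      refine ⟨Finset.disjoint_union_right.mpr ⟨hAB, hsA⟩, ha, ?_,
        Finset.Subset.refl _, Finset.subset_union_left⟩
      rw [Finset.card_union_of_disjoint hsB, hb, hs2]; omega
    · intro s hs s' hs' h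
      rw [Finset.mem_powersetCard] at hs hs'
      have hsB : Disjoint B s := Finset.disjoint_left.mpr
        fun x hx hxs => ((hCmem x).mp (hs.1 hxs)).2 hx
      have hsB' : Disjoint B s' := Finset.disjoint_left.mpr
        fun x hx hxs => ((hCmem x).mp (hs'.1 hxs)).2 hx
      have h2 : B ∪ s = B ∪ s' := (Prod.mk.injEq _ _ _ _ ▸ h).2
      calc s = (B ∪ s) \ B := (Finset.union_sdiff_cancel_left hsB).symm
        _ = (B ∪ s') \ B := by rw [h2]
        _ = s' := Finset.union_sdiff_cancel_left hsB'
    · rintro ⟨I, J⟩ hIJ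
      rw [hmemS] at hIJ
      obtain ⟨hd, hI, hJ, hAI, hBJ⟩ := hIJ
      have hIA : I = A := (Finset.eq_of_subset_of_card_le hAI (by omega)).symm
      refine ⟨J \ B, ?_, ?_⟩
      · rw [Finset.mem_powersetCard]
        constructor
        · intro x hx
          rw [Finset.mem_sdiff] at hx
          rw [hCmem]
          exact ⟨fun h => Finset.disjoint_left.mp hd (hIA ▸ h : x ∈ I) hx.1, hx.2⟩
        · rw [Finset.card_sdiff_of_subset hBJ, hJ, hb]; omega
      · have he : B ∪ J \ B = J := by
          rw [Finset.union_comm, Finset.sdiff_union_of_subset hBJ]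
        simp [hIA, he]
  -- Case 2b: B.card = n
  have case2b : B.card = n → S.card = 3 := by
    intro hb
    have ha : A.card = n - 2 := by omega
    have h3 : (C.powersetCard 2).card = 3 := by
      rw [Finset.card_powersetCard, hCcard]; decide
    rw [← h3]
    refine (Finset.card_bij (fun s _ => (A ∪ s, B)) ?_ ?_ ?_).symm
    · intro s hs
      rw [Finset.mem_powersetCard] at hs
      obtain ⟨hsC, hs2⟩ := hs
      have hsA : Disjoint A s := Finset.disjoint_left.mpr
        fun x hx hxs => ((hCmem x).mp (hsC hxs)).1 hx
      have hsB : Disjoint s B := Finset.disjoint_left.mpr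
        fun x hxs hx => ((hCmem x).mp (hsC hxs)).2 hx
      rw [hmemS]
      refine ⟨Finset.disjoint_union_left.mpr ⟨hAB, hsB⟩, ?_, hb,
        Finset.subset_union_left, Finset.Subset.refl _⟩
      rw [Finset.card_union_of_disjoint hsA, ha, hs2]; omega
    · intro s hs s' hs' h
      rw [Finset.mem_powersetCard] at hs hs'
      have hsA : Disjoint A s := Finset.disjoint_left.mpr
        fun x hx hxs => ((hCmem x).mp (hs.1 hxs)).1 hx
      have hsA' : Disjoint A s' := Finset.disjoint_left.mpr
        fun x hx hxs => ((hCmem x).mp (hs'.1 hxs)).1 hx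
      have h2 : A ∪ s = A ∪ s' := (Prod.mk.injEq _ _ _ _ ▸ h).1
      calc s = (A ∪ s) \ A := (Finset.union_sdiff_cancel_left hsA).symm
        _ = (A ∪ s') \ A := by rw [h2]
        _ = s' := Finset.union_sdiff_cancel_left hsA'
    · rintro ⟨I, J⟩ hIJ
      rw [hmemS] at hIJ
      obtain ⟨hd, hI, hJ, hAI, hBJ⟩ := hIJ
      have hJB : J = B := (Finset.eq_of_subset_of_card_le hBJ (by omega)).symm
      refine ⟨I \ A, ?_, ?_⟩
      · rw [Finset.mem_powersetCard]
        constructor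
        · intro x hx
          rw [Finset.mem_sdiff] at hx
          rw [hCmem]
          exact ⟨hx.2, fun h => Finset.disjoint_right.mp hd (hJB ▸ h : x ∈ J) hx.1⟩
        · rw [Finset.card_sdiff_of_subset hAI, hI, ha]; omega
      · have he : A ∪ I \ A = I := by
          rw [Finset.union_comm, Finset.sdiff_union_of_subset hAI]
        simp [hJB, he]
  refine ⟨fun h => case1 h.1 h.2, fun h => h.elim case2a case2b, ?_⟩
  have hcases : (A.card = n - 1 ∧ B.card = n - 1) ∨ A.card = n ∨ B.card = n := by omega
  rcases hcases with ⟨h1, h2⟩ | h | h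
  · rw [case1 h1 h2]; omega
  · rw [case2a h]; omega
  · rw [case2b h]; omega
end

section
/- Let n ≥ 1 and d = 2n. For any two distinct pairs (I, J) and (I′, J′) of disjoint n-element subsets of {1, …, 2n+1}, the intersection of the cones cone(G(I,J)) and cone(G(I′,J′)) in ℝ^{2n} equals cone(G(I,J) ∩ G(I′,J′)), the nonnegative span of their common generators. (This is the fan condition for Σ: any two maximal cones of the fan of V^{2n} meet along the common face spanned by their shared rays.) -/
/-- The linear functional on `ℝ^m` with coefficient vector `a`. -/
def lfun {m : ℕ} (a v : Fin m → ℝ) : ℝ := ∑ j, a j * v j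

lemma lfun_sum {m : ℕ} (a : Fin m → ℝ) (t : Finset (Fin m → ℝ)) (c : (Fin m → ℝ) → ℝ) :
    lfun a (∑ w ∈ t, c w • w) = ∑ w ∈ t, c w * lfun a w := by
  unfold lfun
  simp only [Finset.sum_apply, Pi.smul_apply, smul_eq_mul, Finset.mul_sum]
  rw [Finset.sum_comm]
  apply Finset.sum_congr rfl
  intro w _
  apply Finset.sum_congr rfl
  intro j _
  ring

lemma cone_mono {m : ℕ} {S T : Set (Fin m → ℝ)} (h : S ⊆ T) : cone S ⊆ cone T := by
  rintro v ⟨t, c, ht, hc, rfl⟩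
  exact ⟨t, c, ht.trans h, hc, rfl⟩

lemma cone_inter_subset {m : ℕ} (S S' : Set (Fin m → ℝ)) (a : Fin m → ℝ)
    (hS : ∀ v ∈ S, 0 ≤ lfun a v) (hS' : ∀ v ∈ S', lfun a v ≤ 0)
    (hz : ∀ v ∈ S, lfun a v = 0 → v ∈ S') :
    cone S ∩ cone S' ⊆ cone (S ∩ S') := by
  classical
  rintro w ⟨⟨t, c, htS, hc, rfl⟩, hw'⟩
  have hle : lfun a (∑ w ∈ t, c w • w) ≤ 0 := by
    obtain ⟨t', c', ht', hc', hw⟩ := hw'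
    rw [hw, lfun_sum]
    apply Finset.sum_nonpos
    intro v hv
    exact mul_nonpos_of_nonneg_of_nonpos (hc' v hv) (hS' v (ht' hv))
  have hterm : ∀ v ∈ t, 0 ≤ c v * lfun a v :=
    fun v hv => mul_nonneg (hc v hv) (hS v (htS hv))
  have hsum0 : ∑ v ∈ t, c v * lfun a v = 0 :=
    le_antisymm (by rw [← lfun_sum]; exact hle) (Finset.sum_nonneg hterm)
  have hzero : ∀ v ∈ t, c v * lfun a v = 0 :=
    (Finset.sum_eq_zero_iff_of_nonneg hterm).mp hsum0
  refine ⟨t.filter (fun v => lfun a v = 0), c, ?_, ?_, ?_⟩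
  · intro v hv
    simp only [Finset.coe_filter, Set.mem_setOf_eq] at hv
    exact ⟨htS hv.1, hz v (htS hv.1) hv.2⟩
  · intro w hw
    exact hc w (Finset.mem_of_mem_filter w hw)
  · symm
    apply Finset.sum_subset (Finset.filter_subset _ _)
    intro v hv hnv
    have hc0 : c v = 0 := by
      have hl : lfun a v ≠ 0 := by
        intro h
        exact hnv (Finset.mem_filter.mpr ⟨hv, h⟩)
      rcases mul_eq_zero.mp (hzero v hv) with h | h
      · exact h
      · exact absurd h hl
    simp [hc0]

/-- For any two distinct pairs `(I,J)` and `(I′,J′)` of disjoint `n`-element subsets of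
`{1, …, 2n+1}`, the intersection of `cone(G(I,J))` and `cone(G(I′,J′))` equals the
nonnegative span of their common generators: any two maximal cones of the fan of `V^{2n}`
meet along the common face spanned by their shared rays. -/
theorem maximal_cones_of_V_intersect_in_common_face (n : ℕ) (hn : 1 ≤ n)
    (I J I' J' : Finset (Fin (2*n+1)))
    (hIJ : Disjoint I J) (hI : I.card = n) (hJ : J.card = n)
    (hIJ' : Disjoint I' J') (hI' : I'.card = n) (hJ' : J'.card = n)
    (hne : (I, J) ≠ (I', J')) :
    cone (Gset n I J) ∩ cone (Gset n I' J') = cone (Gset n I J ∩ Gset n I' J') := by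
  classical
  -- the unique index not in I ∪ J
  have hcard : (I ∪ J)ᶜ.card = 1 := by
    rw [Finset.card_compl, Finset.card_union_of_disjoint hIJ, hI, hJ]
    simp [Fintype.card_fin]
    omega
  obtain ⟨k, hk⟩ := Finset.card_eq_one.mp hcard
  have hkIJ : k ∉ I ∪ J := by
    have : k ∈ (I ∪ J)ᶜ := by rw [hk]; exact Finset.mem_singleton_self k
    exact Finset.mem_compl.mp this
  have hkI : k ∉ I := fun h => hkIJ (Finset.mem_union_left _ h)
  have hkJ : k ∉ J := fun h => hkIJ (Finset.mem_union_right _ h)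
  set P := I \ I' with hPdef
  set N := J \ J' with hNdef
  obtain ⟨p, q, hp, hq, hpq1, hpq2⟩ :
      ∃ p q : ℝ, 0 < p ∧ 0 < q ∧ (k ∈ I' → q * N.card ≤ p * P.card) ∧
        (k ∈ J' → p * P.card ≤ q * N.card) := by
    by_cases hkI' : k ∈ I'
    · refine ⟨2*n+1, 1, by positivity, one_pos, fun _ => ?_, fun hkJ'2 => ?_⟩
      · have h1 : 1 ≤ P.card := by
          rcases Finset.eq_empty_or_nonempty P with h | h
          · exfalso
            have hsub : I ⊆ I' := by rwa [Finset.sdiff_eq_empty_iff_subset] at h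
            have : I = I' := Finset.eq_of_subset_of_card_le hsub (by rw [hI, hI'])
            exact hkI (this ▸ hkI')
          · exact h.card_pos
        have h2 : N.card ≤ 2*n+1 := le_trans (Finset.card_le_univ N) (by simp)
        have h1' : (1:ℝ) ≤ P.card := by exact_mod_cast h1
        have h2' : (N.card : ℝ) ≤ 2*n+1 := by exact_mod_cast h2
        nlinarith
      · exact absurd hkJ'2 (Finset.disjoint_left.mp hIJ' hkI')
    · by_cases hkJ' : k ∈ J'
      · refine ⟨1, 2*n+1, one_pos, by positivity, fun h => absurd h hkI', fun _ => ?_⟩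
        have h1 : 1 ≤ N.card := by
          rcases Finset.eq_empty_or_nonempty N with h | h
          · exfalso
            have hsub : J ⊆ J' := by rwa [Finset.sdiff_eq_empty_iff_subset] at h
            have : J = J' := Finset.eq_of_subset_of_card_le hsub (by rw [hJ, hJ'])
            exact hkJ (this ▸ hkJ')
          · exact h.card_pos
        have h2 : P.card ≤ 2*n+1 := le_trans (Finset.card_le_univ P) (by simp)
        have h1' : (1:ℝ) ≤ N.card := by exact_mod_cast h1
        have h2' : (P.card : ℝ) ≤ 2*n+1 := by exact_mod_cast h2
        nlinarith
      · exact ⟨1, 1, one_pos, one_pos, fun h => absurd h hkI', fun h => absurd h hkJ'⟩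
  set r : ℝ := q * N.card - p * P.card with hrdef
  set f : Fin (2*n+1) → ℝ :=
    fun i => (if i ∈ P then p else 0) - (if i ∈ N then q else 0) + (if i = k then r else 0)
    with hfdef
  have hkP : k ∉ P := fun h => hkI (Finset.mem_sdiff.mp h).1
  have hkN : k ∉ N := fun h => hkJ (Finset.mem_sdiff.mp h).1
  have hsum : ∑ i, f i = 0 := by
    rw [hfdef]
    simp only [Finset.sum_add_distrib, Finset.sum_sub_distrib]
    rw [Finset.sum_ite_mem, Finset.univ_inter, Finset.sum_const,
        Finset.sum_ite_mem, Finset.univ_inter, Finset.sum_const,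
        Finset.sum_ite_eq' Finset.univ k (fun _ => r)]
    simp only [Finset.mem_univ, if_true, nsmul_eq_mul, hrdef]
    ring
  -- properties of f
  have hfI : ∀ i ∈ I, 0 ≤ f i ∧ (f i = 0 → i ∈ I') := by
    intro i hi
    have hiN : i ∉ N := fun h => Finset.disjoint_left.mp hIJ hi (Finset.mem_sdiff.mp h).1
    have hik : i ≠ k := fun h => hkI (h ▸ hi)
    by_cases hiI' : i ∈ I'
    · have hiP : i ∉ P := fun h => (Finset.mem_sdiff.mp h).2 hiI'
      simp only [hfdef, if_neg hiP, if_neg hiN, if_neg hik]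
      exact ⟨by norm_num, fun _ => hiI'⟩
    · have hiP : i ∈ P := Finset.mem_sdiff.mpr ⟨hi, hiI'⟩
      simp only [hfdef, if_pos hiP, if_neg hiN, if_neg hik]
      constructor
      · linarith
      · intro h0; exfalso; linarith
  have hfJ : ∀ i ∈ J, f i ≤ 0 ∧ (f i = 0 → i ∈ J') := by
    intro i hi
    have hiP : i ∉ P := fun h => Finset.disjoint_right.mp hIJ hi (Finset.mem_sdiff.mp h).1
    have hik : i ≠ k := fun h => hkJ (h ▸ hi)
    by_cases hiJ' : i ∈ J'
    · have hiN : i ∉ N := fun h => (Finset.mem_sdiff.mp h).2 hiJ'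
      simp only [hfdef, if_neg hiP, if_neg hiN, if_neg hik]
      exact ⟨by norm_num, fun _ => hiJ'⟩
    · have hiN : i ∈ N := Finset.mem_sdiff.mpr ⟨hi, hiJ'⟩
      simp only [hfdef, if_neg hiP, if_pos hiN, if_neg hik]
      constructor
      · linarith
      · intro h0; exfalso; linarith
  have hfI' : ∀ i ∈ I', f i ≤ 0 := by
    intro i hi
    have hiP : i ∉ P := fun h => (Finset.mem_sdiff.mp h).2 hi
    by_cases hik : i = k
    · subst hik
      simp only [hfdef, if_neg hiP, if_neg hkN, if_pos rfl]
      have := hpq1 hi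
      simp only [hrdef, if_true]
      linarith
    · by_cases hiN : i ∈ N
      · simp only [hfdef, if_neg hiP, if_pos hiN, if_neg hik]
        linarith
      · simp only [hfdef, if_neg hiP, if_neg hiN, if_neg hik]
        norm_num
  have hfJ' : ∀ i ∈ J', 0 ≤ f i := by
    intro i hi
    have hiN : i ∉ N := fun h => (Finset.mem_sdiff.mp h).2 hi
    by_cases hik : i = k
    · subst hik
      simp only [hfdef, if_neg hkP, if_neg hkN, if_pos rfl]
      have := hpq2 hi
      simp only [hrdef, if_true]
      linarith
    · by_cases hiP : i ∈ P
      · simp only [hfdef, if_pos hiP, if_neg hiN, if_neg hik]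
        linarith
      · simp only [hfdef, if_neg hiP, if_neg hiN, if_neg hik]
        norm_num
  -- the coefficient vector of the separating functional
  set a : Fin (2*n) → ℝ := fun j => f j.castSucc with hadef
  have hx : ∀ i : Fin (2*n+1), lfun a (genXR n i) = f i := by
    intro i
    by_cases hi : (i : ℕ) = 2*n
    · have hil : i = Fin.last (2*n) := Fin.ext hi
      have hsum' : ∑ j : Fin (2*n), f j.castSucc + f (Fin.last (2*n)) = 0 := by
        rw [← Fin.sum_univ_castSucc]; exact hsum
      unfold lfun
      simp only [genXR, hi, if_true, hadef, mul_neg, mul_one]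
      rw [Finset.sum_neg_distrib, hil]
      linarith
    · have hlt : (i : ℕ) < 2*n := lt_of_le_of_ne (Nat.lt_succ_iff.mp i.isLt) hi
      have hgen : genXR n i = fun j => if j = (⟨(i : ℕ), hlt⟩ : Fin (2*n)) then 1 else 0 := by
        funext j
        simp only [genXR, if_neg hi, Fin.ext_iff]
      rw [hgen]
      unfold lfun
      simp only [mul_ite, mul_one, mul_zero]
      rw [Finset.sum_ite_eq' Finset.univ _ a]
      simp only [Finset.mem_univ, if_true, hadef]
      congr 1
  have hy : ∀ i : Fin (2*n+1), lfun a (genYR n i) = -(f i) := by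
    intro i
    rw [← hx i]
    unfold lfun genYR
    simp [mul_neg, Finset.sum_neg_distrib]
  apply Set.Subset.antisymm
  · apply cone_inter_subset _ _ a
    · rintro v (⟨i, hi, rfl⟩ | ⟨j, hj, rfl⟩)
      · rw [hx]; exact (hfI i hi).1
      · rw [hy]; linarith [(hfJ j hj).1]
    · rintro v (⟨i, hi, rfl⟩ | ⟨j, hj, rfl⟩)
      · rw [hx]; exact hfI' i hi
      · rw [hy]; linarith [hfJ' j hj]
    · rintro v (⟨i, hi, rfl⟩ | ⟨j, hj, rfl⟩) h0
      · rw [hx] at h0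
        exact Or.inl ⟨i, (hfI i hi).2 h0, rfl⟩
      · rw [hy] at h0
        exact Or.inr ⟨j, (hfJ j hj).2 (by linarith), rfl⟩
  · intro v hv
    exact ⟨cone_mono Set.inter_subset_left hv, cone_mono Set.inter_subset_right hv⟩
end

section
/- Let n ≥ 1 and d = 2n. For every pair (I, J) of disjoint n-element subsets of {1, …, 2n+1} there exists a unique vector u_{I,J} ∈ ℤ^{2n} with ⟨u_{I,J}, g⟩ = −1 for every g ∈ G(I,J) (where ⟨·,·⟩ is the standard pairing), and this vector satisfies ⟨u_{I,J}, g′⟩ > −1 for every generator g′ ∈ {x_1, …, x_{2n+1}, y_1, …, y_{2n+1}} with g′ ∉ G(I,J). (This expresses that the anticanonical divisor of V^{2n} is Cartier and ample, i.e., that V^{2n} is a Fano variety; equivalently, the convex hull of the 4n+2 generators is a smooth reflexive polytope whose facet corresponding to (I,J) has integral inner normal u_{I,J}.) -/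
lemma sum_genX_lt (n : ℕ) (u : Fin (2*n) → ℤ) (i : Fin (2*n+1)) (h : (i:ℕ) < 2*n) :
    ∑ k, u k * genX n i k = u ⟨i, h⟩ := by
  have h2 : ∑ k, u k * genX n i k = ∑ k, if k = (⟨i, h⟩ : Fin (2*n)) then u k else 0 := by
    apply Finset.sum_congr rfl
    intro k _
    simp only [genX, Nat.ne_of_lt h, if_false, Fin.ext_iff]
    by_cases hk : (k:ℕ) = (i:ℕ) <;> simp [hk]
  rw [h2, Finset.sum_ite_eq' Finset.univ]
  simp

lemma sum_genX_last (n : ℕ) (u : Fin (2*n) → ℤ) (i : Fin (2*n+1)) (h : (i:ℕ) = 2*n) :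
    ∑ k, u k * genX n i k = -∑ k, u k := by
  simp [genX, h, Finset.sum_neg_distrib]

lemma sum_genY (n : ℕ) (u : Fin (2*n) → ℤ) (i : Fin (2*n+1)) :
    ∑ k, u k * genY n i k = -∑ k, u k * genX n i k := by
  simp [genY, mul_neg, Finset.sum_neg_distrib]

/-- For every pair `(I,J)` of disjoint `n`-element subsets of `{1, …, 2n+1}` there is a
unique `u ∈ ℤ^{2n}` pairing to `−1` with every element of `G(I,J) = {x_i : i ∈ I} ∪
{y_j : j ∈ J}`, and this `u` pairs to a value `> −1` with every other generator
`x_i` (`i ∉ I`) and `y_j` (`j ∉ J`): the anticanonical divisor of `V^{2n}` is Cartier and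
ample, i.e. `V^{2n}` is Fano. -/
theorem V_is_Fano (n : ℕ) (hn : 1 ≤ n)
    (I J : Finset (Fin (2*n+1))) (hIJ : Disjoint I J)
    (hI : I.card = n) (hJ : J.card = n) :
    ∃ u : Fin (2*n) → ℤ,
      ((∀ i ∈ I, ∑ k, u k * genX n i k = -1) ∧
        (∀ j ∈ J, ∑ k, u k * genY n j k = -1)) ∧
      (∀ i, i ∉ I → -1 < ∑ k, u k * genX n i k) ∧
      (∀ j, j ∉ J → -1 < ∑ k, u k * genY n j k) ∧
      (∀ u' : Fin (2*n) → ℤ,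
        ((∀ i ∈ I, ∑ k, u' k * genX n i k = -1) ∧
          (∀ j ∈ J, ∑ k, u' k * genY n j k = -1)) → u' = u) := by
  classical
  set L : Fin (2*n+1) := Fin.last (2*n) with hLdef
  have hLval : (L : ℕ) = 2*n := rfl
  set g : Fin (2*n+1) → ℤ :=
    fun i => (if i ∈ I then (-1:ℤ) else 0) + (if i ∈ J then 1 else 0) with hgdef
  set u : Fin (2*n) → ℤ := fun k => g (Fin.castSucc k) with hudef
  have hdisj : ∀ a, a ∈ I → a ∉ J := fun a ha => Finset.disjoint_left.mp hIJ ha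
  -- sum of g over everything is 0
  have hg : ∑ i, g i = 0 := by
    rw [hgdef]
    rw [Finset.sum_add_distrib]
    simp [Finset.sum_ite_mem, hI, hJ]
  -- sum of u
  have hs : ∑ k, u k = -(g L) := by
    have h := Fin.sum_univ_castSucc (n := 2*n) g
    rw [hg, ← hLdef] at h
    have h2 : ∑ k, u k = ∑ k : Fin (2*n), g (Fin.castSucc k) := rfl
    omega
  -- values of u
  have huI : ∀ k : Fin (2*n), Fin.castSucc k ∈ I → u k = -1 := by
    intro k hk
    simp [hudef, hgdef, hk, hdisj _ hk]
  have huJ : ∀ k : Fin (2*n), Fin.castSucc k ∈ J → u k = 1 := by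
    intro k hk
    have : Fin.castSucc k ∉ I := fun h => hdisj _ h hk
    simp [hudef, hgdef, hk, this]
  have hu0 : ∀ k : Fin (2*n), Fin.castSucc k ∉ I → Fin.castSucc k ∉ J → u k = 0 := by
    intro k h1 h2
    simp [hudef, hgdef, h1, h2]
  -- generic pairing value for an index below 2n
  have hcast : ∀ (i : Fin (2*n+1)) (h : (i:ℕ) < 2*n),
      Fin.castSucc (⟨(i:ℕ), h⟩ : Fin (2*n)) = i := by
    intro i h; ext; rfl
  refine ⟨u, ⟨?_, ?_⟩, ?_, ?_, ?_⟩
  · -- x_i for i ∈ I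
    intro i hi
    rcases Nat.lt_or_ge (i:ℕ) (2*n) with h | h
    · rw [sum_genX_lt n u i h]
      apply huI
      rw [hcast i h]; exact hi
    · have h' : (i:ℕ) = 2*n := le_antisymm (Nat.lt_succ_iff.mp i.isLt) h
      rw [sum_genX_last n u i h', hs]
      have hiL : i = L := by ext; rw [h', hLval]
      rw [hiL] at hi
      have : L ∉ J := hdisj _ hi
      simp [hgdef, hi, this]
  · -- y_j for j ∈ J
    intro j hj
    rw [sum_genY]
    rcases Nat.lt_or_ge (j:ℕ) (2*n) with h | h
    · rw [sum_genX_lt n u j h]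
      have := huJ ⟨(j:ℕ), h⟩ (by rw [hcast j h]; exact hj)
      omega
    · have h' : (j:ℕ) = 2*n := le_antisymm (Nat.lt_succ_iff.mp j.isLt) h
      rw [sum_genX_last n u j h', hs]
      have hjL : j = L := by ext; rw [h', hLval]
      rw [hjL] at hj
      have : L ∉ I := fun hcon => hdisj _ hcon hj
      simp [hgdef, hj, this]
  · -- strict for x_i, i ∉ I
    intro i hi
    rcases Nat.lt_or_ge (i:ℕ) (2*n) with h | h
    · rw [sum_genX_lt n u i h]
      have hi' : Fin.castSucc (⟨(i:ℕ), h⟩ : Fin (2*n)) ∉ I := by rw [hcast i h]; exact hi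
      by_cases hj : Fin.castSucc (⟨(i:ℕ), h⟩ : Fin (2*n)) ∈ J
      · rw [huJ _ hj]; norm_num
      · rw [hu0 _ hi' hj]; norm_num
    · have h' : (i:ℕ) = 2*n := le_antisymm (Nat.lt_succ_iff.mp i.isLt) h
      rw [sum_genX_last n u i h', hs]
      have hiL : i = L := by ext; rw [h', hLval]
      rw [hiL] at hi
      by_cases hj : L ∈ J <;> simp [hgdef, hi, hj]
  · -- strict for y_j, j ∉ J
    intro j hj
    rw [sum_genY]
    rcases Nat.lt_or_ge (j:ℕ) (2*n) with h | h
    · rw [sum_genX_lt n u j h]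
      have hj' : Fin.castSucc (⟨(j:ℕ), h⟩ : Fin (2*n)) ∉ J := by rw [hcast j h]; exact hj
      by_cases hi : Fin.castSucc (⟨(j:ℕ), h⟩ : Fin (2*n)) ∈ I
      · rw [huI _ hi]; norm_num
      · rw [hu0 _ hi hj']; norm_num
    · have h' : (j:ℕ) = 2*n := le_antisymm (Nat.lt_succ_iff.mp j.isLt) h
      rw [sum_genX_last n u j h', hs]
      have hjL : j = L := by ext; rw [h', hLval]
      rw [hjL] at hj
      by_cases hi : L ∈ I <;> simp [hgdef, hi, hj]
  · -- uniqueness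
    intro u' ⟨h1, h2⟩
    -- the complement of I ∪ J has exactly one element
    have hone : ∀ a b : Fin (2*n+1), a ∉ I → a ∉ J → b ∉ I → b ∉ J → a = b := by
      intro a b ha1 ha2 hb1 hb2
      have hcard : (I ∪ J).card = 2*n := by
        rw [Finset.card_union_of_disjoint hIJ, hI, hJ]; ring
      have hccard : (I ∪ J)ᶜ.card = 1 := by
        rw [Finset.card_compl, hcard, Fintype.card_fin]
        omega
      have ha : a ∈ (I ∪ J)ᶜ := by simp [ha1, ha2]
      have hb : b ∈ (I ∪ J)ᶜ := by simp [hb1, hb2]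
      exact Finset.card_le_one.mp (le_of_eq hccard) a ha b hb
    -- coordinates whose castSucc lies in I ∪ J agree
    have hXval : ∀ k : Fin (2*n), Fin.castSucc k ∈ I → u' k = -1 := by
      intro k hk
      have h3 := h1 _ hk
      rw [sum_genX_lt n u' (Fin.castSucc k) (by simp)] at h3
      exact h3
    have hYval : ∀ k : Fin (2*n), Fin.castSucc k ∈ J → u' k = 1 := by
      intro k hk
      have h4 := h2 _ hk
      rw [sum_genY, sum_genX_lt n u' (Fin.castSucc k) (by simp)] at h4
      have h3 : u' ⟨((Fin.castSucc k):ℕ), by simp⟩ = u' k := rfl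
      omega
    have heq : ∀ k : Fin (2*n), Fin.castSucc k ∈ I ∨ Fin.castSucc k ∈ J → u' k = u k := by
      intro k hk
      rcases hk with hk | hk
      · rw [hXval k hk, huI k hk]
      · rw [hYval k hk, huJ k hk]
    funext k
    by_cases hkI : Fin.castSucc k ∈ I
    · exact heq k (Or.inl hkI)
    by_cases hkJ : Fin.castSucc k ∈ J
    · exact heq k (Or.inr hkJ)
    -- remaining case: castSucc k is the missing element
    have hLne : L ≠ Fin.castSucc k := by
      intro hcon
      have : (2*n : ℕ) = (k:ℕ) := congrArg Fin.val hcon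
      have := k.isLt
      omega
    have hLmem : L ∈ I ∨ L ∈ J := by
      by_contra hcon
      push_neg at hcon
      exact hLne (hone L (Fin.castSucc k) hcon.1 hcon.2 hkI hkJ)
    -- sums of u' and u agree
    have hsum' : ∑ j, u' j = ∑ j, u j := by
      rcases hLmem with hL | hL
      · have := h1 L hL
        rw [sum_genX_last n u' L hLval] at this
        have hLJ : L ∉ J := hdisj _ hL
        rw [hs]
        simp [hgdef, hL, hLJ]
        omega
      · have := h2 L hL
        rw [sum_genY, sum_genX_last n u' L hLval] at this
        have hLI : L ∉ I := fun hcon => hdisj _ hcon hL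
        rw [hs]
        simp [hgdef, hL, hLI]
        omega
    -- all other coordinates agree
    have hrest : ∀ j ∈ Finset.univ.erase k, u' j = u j := by
      intro j hj
      have hjk : j ≠ k := Finset.ne_of_mem_erase hj
      apply heq
      by_contra hcon
      push_neg at hcon
      exact hjk (Fin.castSucc_injective _
        (hone (Fin.castSucc j) (Fin.castSucc k) hcon.1 hcon.2 hkI hkJ))
    have e1 : ∑ j, u' j = u' k + ∑ j ∈ Finset.univ.erase k, u' j :=
      (Finset.add_sum_erase _ _ (Finset.mem_univ k)).symm
    have e2 : ∑ j, u j = u k + ∑ j ∈ Finset.univ.erase k, u j :=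
      (Finset.add_sum_erase _ _ (Finset.mem_univ k)).symm
    have e3 : ∑ j ∈ Finset.univ.erase k, u' j = ∑ j ∈ Finset.univ.erase k, u j :=
      Finset.sum_congr rfl hrest
    omega
end
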